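/- arXiv:math/9807014 — 2 statements merged into one kernel-verified Lean document; each statement's English description precedes it below -/
import Mathlib

section
/- Fix positive integers l and k, and fix a residue r ∈ {0, 1, ..., l-1}. For any partition λ with at most k rows, the number of indent r-nodes of λ in rows ≤ k minus the number of removable r-nodes of λ is determined by λ. Moreover, if every removable r-node of λ lies strictly below every indent r-node of λ, and μ is obtained from λ by adding the m highest indent r-nodes of λ, then for the standard skew tableau T_0 filling μ∖λ from top to bottom one has N(T_0) = -C(m,2), where N(T_0) = Σ_i N(μ^{(i-1)}, μ^{(i)}) and N(ν, ν∪{box in row s}) is the number of indent r-nodes of ν in rows s' < s minus the number of removable r-nodes of ν in rows s' < s. Consequently N(λ, μ) := N(T_0) + C(m,2) = 0. -/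
/-- (i, λ_i + 1) is an indent node of λ (row i). -/
def IsIndentNode (lam : ℕ → ℕ) (i : ℕ) : Prop := i = 1 ∨ lam i < lam (i - 1)

/-- (i, λ_i) is a removable node of λ (row i). -/
def IsRemovableNode (lam : ℕ → ℕ) (i : ℕ) : Prop := lam (i + 1) < lam i

instance (lam : ℕ → ℕ) (i : ℕ) : Decidable (IsIndentNode lam i) :=
  inferInstanceAs (Decidable (i = 1 ∨ lam i < lam (i - 1)))

instance (lam : ℕ → ℕ) (i : ℕ) : Decidable (IsRemovableNode lam i) :=
  inferInstanceAs (Decidable (lam (i + 1) < lam i))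

/-- Row i carries an indent node of λ of l-residue r. -/
def IsIndentR (l : ℕ) (lam : ℕ → ℕ) (r : ℤ) (i : ℕ) : Prop :=
  IsIndentNode lam i ∧ ((lam i : ℤ) + 1 - (i : ℤ)) % (l : ℤ) = r

/-- Row i carries a removable node of λ of l-residue r. -/
def IsRemovableR (l : ℕ) (lam : ℕ → ℕ) (r : ℤ) (i : ℕ) : Prop :=
  IsRemovableNode lam i ∧ ((lam i : ℤ) - (i : ℤ)) % (l : ℤ) = r

instance (l : ℕ) (lam : ℕ → ℕ) (r : ℤ) (i : ℕ) : Decidable (IsIndentR l lam r i) :=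
  inferInstanceAs (Decidable (IsIndentNode lam i ∧ ((lam i : ℤ) + 1 - (i : ℤ)) % (l : ℤ) = r))

instance (l : ℕ) (lam : ℕ → ℕ) (r : ℤ) (i : ℕ) : Decidable (IsRemovableR l lam r i) :=
  inferInstanceAs (Decidable (IsRemovableNode lam i ∧ ((lam i : ℤ) - (i : ℤ)) % (l : ℤ) = r))

/-- N(λ, ν) for ν = λ plus one node of residue r in row s: the number of indent r-nodes
of λ in rows above s minus the number of removable r-nodes of λ in rows above s. -/
def Ncoef (l : ℕ) (lam : ℕ → ℕ) (r : ℤ) (s : ℕ) : ℤ :=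
  (((Finset.Ico 1 s).filter (IsIndentR l lam r)).card : ℤ)
    - (((Finset.Ico 1 s).filter (IsRemovableR l lam r)).card : ℤ)

lemma sum_range_cast_choose (m : ℕ) : (∑ t ∈ Finset.range m, (t:ℤ)) = (m.choose 2 : ℤ) := by
  induction m with
  | zero => simp
  | succ n ih =>
    rw [Finset.sum_range_succ, ih]
    have : (n+1).choose 2 = n.choose 2 + n := by
      rw [Nat.choose_succ_succ n 1, Nat.choose_one_right]; ring
    rw [this]; push_cast; ring

lemma mod_succ_absurd (l : ℕ) (h2 : 2 ≤ l) (a : ℤ) (r : ℤ)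
    (h : a % (l:ℤ) = r) (h' : (a+1) % (l:ℤ) = r) : False := by
  have hd : (l:ℤ) ∣ (a + 1 - a) := Int.ModEq.dvd (by rw [Int.ModEq, h, h'])
  simp at hd
  have := Int.le_of_dvd one_pos hd
  omega

/-- Suppose every removable r-node of λ lies strictly below every indent
r-node of λ, and μ is obtained from λ by adding the m highest indent r-nodes of λ
(in rows `rows 0 < rows 1 < ... < rows (m-1)`, filled from top to bottom, with
intermediate diagrams μ^{(t)} = λ plus the first t added nodes).  Then for the standard
skew tableau T₀ filling μ∖λ from top to bottom,
N(T₀) = Σ_t N(μ^{(t)}, μ^{(t+1)}) = -C(m,2); consequently N(λ,μ) = N(T₀) + C(m,2) = 0. -/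
theorem NT0_eq_neg_choose
    (l k m : ℕ) (hl : 0 < l) (lam : ℕ → ℕ) (r : ℤ)
    (hpart : ∀ i, 1 ≤ i → lam (i + 1) ≤ lam i)
    (hsupp : ∀ i, k < i → lam i = 0)
    (rows : ℕ → ℕ)
    (hrows1 : ∀ t, t < m → 1 ≤ rows t)
    (hmono : ∀ t t', t < t' → t' < m → rows t < rows t')
    (hind : ∀ t, t < m → IsIndentR l lam r (rows t))
    (hhighest : ∀ i, 1 ≤ i → IsIndentR l lam r i → (∀ t, t < m → rows t ≠ i) →
        ∀ t, t < m → rows t < i)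
    (hbelow : ∀ i j, 1 ≤ i → 1 ≤ j → IsRemovableR l lam r i → IsIndentR l lam r j → j < i)
    (mu : ℕ → ℕ → ℕ)
    (hmu : ∀ t j, mu t j = lam j + ((Finset.range t).filter (fun t' => rows t' = j)).card) :
    (∑ t ∈ Finset.range m, Ncoef l (mu t) r (rows t)) = -(m.choose 2 : ℤ)
    ∧ (∑ t ∈ Finset.range m, Ncoef l (mu t) r (rows t)) + (m.choose 2 : ℤ) = 0 := by
  suffices hsum : (∑ t ∈ Finset.range m, Ncoef l (mu t) r (rows t)) = -(m.choose 2 : ℤ) by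
    exact ⟨hsum, by rw [hsum]; ring⟩
  by_cases h2 : 2 ≤ l
  · -- main case: l ≥ 2
    have key : ∀ t, t < m → Ncoef l (mu t) r (rows t) = -(t:ℤ) := by
      intro t ht
      -- chosen rows
      have hmu_chosen : ∀ t', t' < t → mu t (rows t') = lam (rows t') + 1 := by
        intro t' ht'
        rw [hmu]
        congr 1
        have : (Finset.range t).filter (fun s => rows s = rows t') = {t'} := by
          ext s
          simp only [Finset.mem_filter, Finset.mem_range, Finset.mem_singleton]
          constructor
          · rintro ⟨hs, heq⟩
            rcases lt_trichotomy s t' with h | h | h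
            · exact absurd heq (Nat.ne_of_lt (hmono s t' h (lt_trans ht' ht)))
            · exact h
            · exact absurd heq.symm (Nat.ne_of_lt (hmono t' s h (lt_trans hs ht)))
          · rintro rfl; exact ⟨ht', rfl⟩
        rw [this, Finset.card_singleton]
      have hmu_un : ∀ j, (∀ t', t' < t → rows t' ≠ j) → mu t j = lam j := by
        intro j hj
        rw [hmu]
        have : (Finset.range t).filter (fun s => rows s = j) = ∅ := by
          rw [Finset.filter_eq_empty_iff]
          intro s hs
          exact hj s (Finset.mem_range.mp hs)
        rw [this]; simp
      -- unchosen rows above `rows t` are unchosen for all t'' < m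
      have hun_all : ∀ j, j < rows t → (∀ t', t' < t → rows t' ≠ j) →
          ∀ t'', t'' < m → rows t'' ≠ j := by
        intro j hjlt hj t'' ht''
        by_cases h : t'' < t
        · exact hj t'' h
        · push_neg at h
          have : rows t ≤ rows t'' := by
            rcases Nat.eq_or_lt_of_le h with h | h
            · rw [h]
            · exact le_of_lt (hmono t t'' h ht'')
          omega
      -- (A) no indent r-nodes of mu t above rows t
      have hA : (Finset.Ico 1 (rows t)).filter (IsIndentR l (mu t) r) = ∅ := by
        rw [Finset.filter_eq_empty_iff]
        intro i hi
        rw [Finset.mem_Ico] at hi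
        obtain ⟨hi1, hi2⟩ := hi
        rintro ⟨hin, hres⟩
        by_cases hch : ∃ t', t' < t ∧ rows t' = i
        · obtain ⟨t', ht', hrt'⟩ := hch
          have hmui : mu t i = lam i + 1 := by rw [← hrt']; exact hmu_chosen t' ht'
          have hresl : ((lam i : ℤ) + 1 - i) % l = r := by
            have := (hind t' (lt_trans ht' ht)).2
            rwa [hrt'] at this
          rw [hmui] at hres
          push_cast at hres
          exact mod_succ_absurd l h2 ((lam i : ℤ) + 1 - i) r hresl (by rw [← hres]; ring_nf)
        · push_neg at hch
          have hmui : mu t i = lam i := hmu_un i hch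
          have hun : ∀ t'', t'' < m → rows t'' ≠ i := hun_all i hi2 hch
          rw [hmui] at hres
          by_cases hi1' : i = 1
          · have : IsIndentR l lam r i := ⟨Or.inl hi1', hres⟩
            have := hhighest i hi1 this hun t ht
            have := hrows1 t ht
            omega
          · have hlt : mu t i < mu t (i - 1) := by
              rcases hin with h | h
              · exact absurd h hi1'
              · exact h
            rw [hmui] at hlt
            by_cases hch' : ∃ t', t' < t ∧ rows t' = i - 1
            · obtain ⟨t', ht', hrt'⟩ := hch'
              have hmui' : mu t (i - 1) = lam (i - 1) + 1 := by
                rw [← hrt']; exact hmu_chosen t' ht'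
              rw [hmui'] at hlt
              by_cases hlt' : lam i < lam (i - 1)
              · have : IsIndentR l lam r i := ⟨Or.inr hlt', hres⟩
                have := hhighest i hi1 this hun t ht
                omega
              · -- lam i = lam (i-1), both residues give l ∣ 1
                have hle : lam i ≤ lam (i - 1) := by
                  have := hpart (i - 1) (by omega)
                  have h' : i - 1 + 1 = i := by omega
                  rwa [h'] at this
                have heq : lam i = lam (i - 1) := by omega
                have hresl : ((lam (i - 1) : ℤ) + 1 - ((i : ℤ) - 1)) % l = r := by
                  have := (hind t' (lt_trans ht' ht)).2
                  rw [hrt'] at this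
                  have hc : ((i - 1 : ℕ) : ℤ) = (i : ℤ) - 1 := by
                    have : 1 ≤ i := hi1; push_cast [this]; ring
                  rwa [hc] at this
                refine mod_succ_absurd l h2 ((lam i : ℤ) + 1 - i) r hres ?_
                rw [heq]
                have : (lam (i-1) : ℤ) + 1 - i + 1 = (lam (i-1) : ℤ) + 1 - ((i:ℤ) - 1) := by ring
                rw [this]; exact hresl
            · push_neg at hch'
              have hmui' : mu t (i - 1) = lam (i - 1) := hmu_un _ hch'
              rw [hmui'] at hlt
              have : IsIndentR l lam r i := ⟨Or.inr hlt, hres⟩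
              have := hhighest i hi1 this hun t ht
              omega
      -- (B) removable r-nodes of mu t above rows t = chosen rows
      have hB : (Finset.Ico 1 (rows t)).filter (IsRemovableR l (mu t) r)
          = (Finset.range t).image rows := by
        ext i
        simp only [Finset.mem_filter, Finset.mem_Ico, Finset.mem_image, Finset.mem_range]
        constructor
        · rintro ⟨⟨hi1, hi2⟩, hrm, hres⟩
          by_contra hch
          push_neg at hch
          have hch' : ∀ t', t' < t → rows t' ≠ i := fun t' ht' => hch t' ht'
          have hmui : mu t i = lam i := hmu_un i hch'
          have hrm' : lam (i + 1) < lam i := by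
            unfold IsRemovableNode at hrm
            rw [hmui] at hrm
            by_cases hch'' : ∃ t', t' < t ∧ rows t' = i + 1
            · obtain ⟨t', ht', hrt'⟩ := hch''
              have : mu t (i + 1) = lam (i + 1) + 1 := by
                rw [← hrt']; exact hmu_chosen t' ht'
              omega
            · push_neg at hch''
              have : mu t (i + 1) = lam (i + 1) := hmu_un _ hch''
              omega
          rw [hmui] at hres
          have : IsRemovableR l lam r i := ⟨hrm', hres⟩
          have := hbelow i (rows t) hi1 (hrows1 t ht) this (hind t ht)
          omega
        · rintro ⟨t', ht', rfl⟩
          have htm' : t' < m := lt_trans ht' ht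
          have h1 : 1 ≤ rows t' := hrows1 t' htm'
          have h2' : rows t' < rows t := hmono t' t ht' ht
          have hmui : mu t (rows t') = lam (rows t') + 1 := hmu_chosen t' ht'
          refine ⟨⟨h1, h2'⟩, ?_, ?_⟩
          · unfold IsRemovableNode
            rw [hmui]
            by_cases hch : ∃ s, s < t ∧ rows s = rows t' + 1
            · obtain ⟨s, hs, hrs⟩ := hch
              have : mu t (rows t' + 1) = lam (rows t' + 1) + 1 := by
                rw [← hrs]; exact hmu_chosen s hs
              rw [this]
              have hin := (hind s (lt_trans hs ht)).1
              rcases hin with h | h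
              · omega
              · rw [hrs] at h
                have hc : rows t' + 1 - 1 = rows t' := by omega
                rw [hc] at h
                omega
            · push_neg at hch
              have : mu t (rows t' + 1) = lam (rows t' + 1) := hmu_un _ hch
              rw [this]
              have := hpart (rows t') h1
              omega
          · show ((mu t (rows t') : ℤ) - rows t') % l = r
            have h := (hind t' htm').2
            rw [hmui]
            push_cast
            convert h using 2
      have hcard : ((Finset.range t).image rows).card = t := by
        rw [Finset.card_image_of_injOn, Finset.card_range]
        intro a ha b hb hab
        simp only [Finset.coe_range, Set.mem_Iio] at ha hb
        by_contra hne
        rcases lt_or_gt_of_ne hne with h | h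
        · exact absurd hab (Nat.ne_of_lt (hmono a b h (lt_trans hb ht)))
        · exact absurd hab.symm (Nat.ne_of_lt (hmono b a h (lt_trans ha ht)))
      unfold Ncoef
      rw [hA, hB, hcard]
      simp
    rw [Finset.sum_congr rfl (fun t ht => key t (Finset.mem_range.mp ht))]
    rw [← sum_range_cast_choose, ← Finset.sum_neg_distrib]
  · -- degenerate case l = 1
    have hl1 : l = 1 := by omega
    subst hl1
    rcases Nat.eq_zero_or_pos m with hm | hm
    · subst hm; simp
    · -- r = 0
      have hr : r = 0 := by
        have := (hind 0 hm).2
        simpa [Int.emod_one] using this.symm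
      have hno_rem : ∀ i, 1 ≤ i → ¬ IsRemovableNode lam i := by
        intro i hi hrm
        have hremR : IsRemovableR 1 lam r i := ⟨hrm, by simp [Int.emod_one, hr]⟩
        have hindR : IsIndentR 1 lam r (i + 1) := by
          refine ⟨Or.inr ?_, by simp [Int.emod_one, hr]⟩
          have hc : i + 1 - 1 = i := by omega
          rw [hc]; exact hrm
        have := hbelow i (i + 1) hi (by omega) hremR hindR
        omega
      have hzero : ∀ i, 1 ≤ i → lam i = 0 := by
        have haux : ∀ n i, 1 ≤ i → k < i + n → lam i = 0 := by
          intro n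
          induction n with
          | zero => intro i hi hk; exact hsupp i (by omega)
          | succ n ih =>
            intro i hi hk
            by_cases h : k < i
            · exact hsupp i h
            · have h1 : lam (i + 1) ≤ lam i := hpart i hi
              have h2 : ¬ lam (i + 1) < lam i := hno_rem i hi
              have h3 : lam (i + 1) = 0 := ih (i + 1) (by omega) (by omega)
              omega
        intro i hi
        exact haux (k + 1) i hi (by omega)
      have hrow0 : rows 0 = 1 := by
        rcases (hind 0 hm).1 with h | h
        · exact h
        · by_contra hne
          have h1 : 1 ≤ rows 0 := hrows1 0 hm
          have h2' : 2 ≤ rows 0 := by omega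
          rw [hzero (rows 0) h1, hzero (rows 0 - 1) (by omega)] at h
          omega
      have hm1 : m = 1 := by
        by_contra hne
        have hm2 : 2 ≤ m := by omega
        have h1 : rows 0 < rows 1 := hmono 0 1 (by omega) hm2
        rcases (hind 1 hm2).1 with h | h
        · omega
        · rw [hzero (rows 1) (by omega), hzero (rows 1 - 1) (by omega)] at h
          omega
      subst hm1
      rw [Finset.sum_range_one]
      unfold Ncoef
      rw [hrow0]
      simp
end

section
/- Let k ≤ l. Every open face of the level-l alcove geometry in the positive Weyl chamber of sl_k contains a dominant integral weight: precisely, if a is a dominant integral weight with (a, α_i) divisible by l for all simple roots α_i, and I = {i : (a, α_i) = 0}, then the point p = a + Σ_{i∈I} Λ_i lies in the interior of the face F = conv({a} ∪ {a + lΛ_i : i ∈ I}) of the closure of the translated fundamental alcove a + A^+, and p lies in the interior of the positive Weyl chamber. -/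
/-- F is a face of the convex set C: a convex subset such that whenever a point of F is a
proper convex combination of two points of C, both points lie in F. -/
def IsFaceOf (F C : Set (ℕ → ℝ)) : Prop :=
  F ⊆ C ∧ Convex ℝ F ∧
    ∀ a b : ℕ → ℝ, a ∈ C → b ∈ C → ∀ t : ℝ, 0 < t → t < 1 →
      t • a + (1 - t) • b ∈ F → a ∈ F ∧ b ∈ F

/-- The fundamental weight Λ_i of gl_k, as the vector with 1 in coordinates ≤ i
(including the dummy coordinate 0, which is clamped to coordinate 1). -/
noncomputable def LamV (i : ℕ) : ℕ → ℝ := fun j => if j ≤ i then 1 else 0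

/-!
Modulo the diagonal, `x - a = ∑ᵢ (x - a, αᵢ) Λᵢ`, so in the coordinates `gᵢ = (x - a, αᵢ)` the
closed alcove `a + Ā⁺` is the simplex `gᵢ ≥ 0, ∑ gᵢ ≤ l`, and the convex hull of `a` and the
`a + l Λᵢ` (`i ∈ I`) is its section by the walls `gᵢ = 0` (`i ∉ I`), hence a face. The point `p`
has `gᵢ = 1` for `i ∈ I`, and `|I| < k ≤ l`, so it satisfies every remaining inequality strictly:
the segment from any other point of the face through `p` can be prolonged beyond `p` inside the
face, which keeps `p` out of every proper subface. Finally `(p, αᵢ) = (a, αᵢ) + [i ∈ I] > 0`.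
-/

open Finset

theorem add_sum_smul_mem_convexHull {E ι : Type*} [AddCommGroup E] [Module ℝ E] (a : E)
    (v : ι → E) (s : Finset ι) {w : ι → ℝ} (hw₀ : ∀ i ∈ s, 0 ≤ w i) (hw₁ : ∑ i ∈ s, w i ≤ 1) :
    a + ∑ i ∈ s, w i • v i ∈ convexHull ℝ ({a} ∪ (fun i => a + v i) '' s) := by
  have key := (convex_convexHull ℝ ({a} ∪ (fun i => a + v i) '' s)).sum_mem
    (t := s.insertNone) (w := fun o => o.elim (1 - ∑ i ∈ s, w i) w)
    (z := fun o => o.elim a fun i => a + v i) ?_ ?_ ?_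
  · convert key using 1
    simp only [sum_insertNone, Option.elim, smul_add, sum_add_distrib, ← sum_smul]
    module
  · rintro (_ | i) hi
    · simpa using hw₁
    · exact hw₀ i (mem_insertNone.1 hi i rfl)
  · simp [sum_insertNone]
  · rintro (_ | i) hi
    · exact subset_convexHull ℝ _ (Or.inl rfl)
    · exact subset_convexHull ℝ _ (Or.inr ⟨i, mem_insertNone.1 hi i rfl, rfl⟩)

theorem isFaceOf_sep_forall_eq_of_le {C : Set (ℕ → ℝ)} (hC : Convex ℝ C) {ι : Type*}
    (s : Set ι) (φ : ι → (ℕ → ℝ) → ℝ) (hφ : ∀ i, IsLinearMap ℝ (φ i)) (c : ι → ℝ)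
    (hle : ∀ i ∈ s, ∀ x ∈ C, c i ≤ φ i x) :
    IsFaceOf {x ∈ C | ∀ i ∈ s, φ i x = c i} C := by
  have hcomb : ∀ i (u v : ℕ → ℝ) (α β : ℝ), φ i (α • u + β • v) = α * φ i u + β * φ i v :=
    fun i u v α β => by
      rw [(hφ i).map_add, (hφ i).map_smul, (hφ i).map_smul, smul_eq_mul, smul_eq_mul]
  refine ⟨fun x hx => hx.1, ?_, fun u v hu hv t ht₀ ht₁ h => ?_⟩
  · intro u hu v hv α β hα hβ hαβ
    refine ⟨hC hu.1 hv.1 hα hβ hαβ, fun i hi => ?_⟩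
    rw [hcomb, hu.2 i hi, hv.2 i hi, ← add_mul, hαβ, one_mul]
  · have hboth : ∀ i ∈ s, φ i u = c i ∧ φ i v = c i := by
      intro i hi
      have hu' := hle i hi u hu
      have hv' := hle i hi v hv
      have hm := h.2 i hi
      rw [hcomb] at hm
      constructor <;> nlinarith
    exact ⟨⟨hu, fun i hi => (hboth i hi).1⟩, ⟨hv, fun i hi => (hboth i hi).2⟩⟩

theorem IsFaceOf.notMem_of_ne {F G : Set (ℕ → ℝ)} (hG : IsFaceOf G F) (hGF : G ≠ F)
    {p : ℕ → ℝ} (hp : ∀ q ∈ F, ∃ ε : ℝ, 0 < ε ∧ (1 + ε) • p - ε • q ∈ F) : p ∉ G := by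
  intro hpG
  refine hGF (hG.1.antisymm fun q hq => ?_)
  obtain ⟨ε, hε, hy⟩ := hp q hq
  have hε' : (1 + ε) ≠ 0 := by positivity
  have hp_eq : (1 + ε)⁻¹ • ((1 + ε) • p - ε • q) + (1 - (1 + ε)⁻¹) • q = p := by
    rw [smul_sub, smul_smul, smul_smul, inv_mul_cancel₀ hε', one_smul, sub_smul, one_smul]
    have : (1 + ε)⁻¹ * ε = 1 - (1 + ε)⁻¹ := by field_simp; ring
    rw [this, sub_smul, one_smul]
    abel
  exact (hG.2.2 _ q hy hq _ (by positivity) (inv_lt_one_of_one_lt₀ (by linarith))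
    (hp_eq ▸ hpG)).2

theorem lamV_sub_lamV_succ (i j : ℕ) : LamV j i - LamV j (i + 1) = if i = j then 1 else 0 := by
  unfold LamV
  split_ifs <;> first | omega | norm_num

theorem sum_smul_lamV_apply (I : Finset ℕ) (w : ℕ → ℝ) (j : ℕ) :
    (∑ i ∈ I, w i • LamV i) j = ∑ i ∈ I with j ≤ i, w i := by
  simp [Finset.sum_apply, LamV, sum_filter]

theorem sum_smul_lamV_sub_succ (I : Finset ℕ) (w : ℕ → ℝ) (i : ℕ) :
    (∑ j ∈ I, w j • LamV j) i - (∑ j ∈ I, w j • LamV j) (i + 1) = if i ∈ I then w i else 0 := by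
  simp only [Finset.sum_apply, Pi.smul_apply, smul_eq_mul, ← sum_sub_distrib, ← mul_sub,
    lamV_sub_lamV_succ, mul_ite, mul_one, mul_zero, sum_ite_eq]

theorem eq_const_add_sum_smul_lamV {k : ℕ} {z : ℕ → ℝ} (h₀ : z 0 = z 1)
    (htail : ∀ j, k ≤ j → z j = z k) :
    z = (fun _ => z k) + ∑ i ∈ Ico 1 k, (z i - z (i + 1)) • LamV i := by
  funext j
  rw [Pi.add_apply, sum_smul_lamV_apply, Ico_filter_le]
  rcases le_or_gt (max 1 j) k with h | h
  · have htel := sum_Ico_sub z h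
    rw [sum_sub_distrib] at htel ⊢
    have hj : z (max 1 j) = z j := by
      rcases Nat.eq_zero_or_pos j with rfl | hj
      · simpa using h₀.symm
      · rw [max_eq_right hj]
    linarith
  · rw [Ico_eq_empty_of_le h.le, sum_empty, add_zero, htail j (by omega)]

def closedAlcove (k l : ℕ) (a : ℕ → ℝ) : Set (ℕ → ℝ) :=
  {x | (∀ i, 1 ≤ i → i < k → x (i + 1) - a (i + 1) ≤ x i - a i)
      ∧ (x 1 - a 1) - (x k - a k) ≤ (l : ℝ)
      ∧ x 0 = x 1 ∧ ∀ j, k ≤ j → x j = x k}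

def alcoveFace (k l : ℕ) (a : ℕ → ℝ) (I : Finset ℕ) : Set (ℕ → ℝ) :=
  {x ∈ closedAlcove k l a | ∀ i ∈ Ico 1 k \ I, x i - x (i + 1) = a i - a (i + 1)}

theorem convex_closedAlcove (k l : ℕ) (a : ℕ → ℝ) : Convex ℝ (closedAlcove k l a) := by
  rintro u ⟨hu₁, hu₂, hu₃, hu₄⟩ v ⟨hv₁, hv₂, hv₃, hv₄⟩ α β hα hβ hαβ
  obtain rfl : β = 1 - α := by linarith
  simp only [closedAlcove, Set.mem_ofPred_eq, Pi.add_apply, Pi.smul_apply, smul_eq_mul]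
  refine ⟨fun i h₁ h₂ => ?_, ?_, by rw [hu₃, hv₃], fun j hj => by rw [hu₄ j hj, hv₄ j hj]⟩
  · nlinarith [hu₁ i h₁ h₂, hv₁ i h₁ h₂]
  · nlinarith

theorem isFaceOf_alcoveFace (k l : ℕ) (a : ℕ → ℝ) (I : Finset ℕ) :
    IsFaceOf (alcoveFace k l a I) (closedAlcove k l a) :=
  isFaceOf_sep_forall_eq_of_le (convex_closedAlcove k l a) ↑(Ico 1 k \ I)
    (fun i x => x i - x (i + 1))
    (fun i => ⟨fun x y => by simp only [Pi.add_apply]; ring,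
      fun c x => by simp only [Pi.smul_apply, smul_eq_mul]; ring⟩)
    (fun i => a i - a (i + 1)) fun i hi x hx => by
      have := hx.1 i (mem_Ico.1 (mem_sdiff.1 hi).1).1 (mem_Ico.1 (mem_sdiff.1 hi).1).2
      linarith

section alcoveFace

variable {k l : ℕ} {a : ℕ → ℝ} {I : Finset ℕ}

theorem sub_smul_one_mem_alcoveFace_iff (c : ℝ) {x : ℕ → ℝ} :
    x - c • (fun _ => (1 : ℝ)) ∈ alcoveFace k l a I ↔ x ∈ alcoveFace k l a I := by
  simp only [alcoveFace, closedAlcove, Set.mem_ofPred_eq, Pi.sub_apply,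
    Pi.smul_apply, smul_eq_mul, mul_one]
  constructor <;> rintro ⟨⟨h₁, h₂, h₃, h₄⟩, h₅⟩ <;>
    exact ⟨⟨fun i hi hik => by linarith [h₁ i hi hik], by linarith, by linarith,
      fun j hj => by linarith [h₄ j hj]⟩, fun i hi => by linarith [h₅ i hi]⟩

theorem add_sum_smul_lamV_mem_alcoveFace (ha₀ : a 0 = a 1) (hatail : ∀ j, k ≤ j → a j = a k)
    (hI : I ⊆ Ico 1 k) {w : ℕ → ℝ} (hw₀ : ∀ i ∈ I, 0 ≤ w i) (hw : ∑ i ∈ I, w i ≤ l) :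
    a + ∑ i ∈ I, w i • LamV i ∈ alcoveFace k l a I := by
  set z := ∑ i ∈ I, w i • LamV i with hz
  have hgap : ∀ i, z i - z (i + 1) = if i ∈ I then w i else 0 := sum_smul_lamV_sub_succ I w
  have hlow : ∀ j ≤ 1, z j = ∑ i ∈ I, w i := fun j hj => by
    rw [hz, sum_smul_lamV_apply, filter_true_of_mem fun i hi => ?_]
    have := (mem_Ico.1 (hI hi)).1
    omega
  have hhigh : ∀ j, k ≤ j → z j = 0 := fun j hj => by
    rw [hz, sum_smul_lamV_apply, filter_false_of_mem fun i hi => ?_, sum_empty]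
    have := (mem_Ico.1 (hI hi)).2
    omega
  simp only [alcoveFace, closedAlcove, Set.mem_ofPred_eq, Pi.add_apply]
  refine ⟨⟨fun i _ _ => ?_, ?_, ?_, fun j hj => ?_⟩, fun i hi => ?_⟩
  · have := hgap i
    split_ifs at this with hi
    · linarith [hw₀ i hi]
    · linarith
  · linarith [hlow 1 le_rfl, hhigh k le_rfl]
  · rw [ha₀, hlow 0 (by norm_num), hlow 1 le_rfl]
  · rw [hatail j hj, hhigh j hj, hhigh k le_rfl]
  · have := hgap i
    rw [if_neg (mem_sdiff.1 hi).2] at this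
    linarith

theorem exists_sub_smul_one_eq_add_sum_smul_lamV (hI : I ⊆ Ico 1 k) {x : ℕ → ℝ}
    (ha₀ : a 0 = a 1) (hatail : ∀ j, k ≤ j → a j = a k) (hx : x ∈ alcoveFace k l a I) :
    ∃ w : ℕ → ℝ, (∀ i ∈ I, 0 ≤ w i) ∧ ∑ i ∈ I, w i ≤ l ∧
      x - (x k - a k) • (fun _ => (1 : ℝ)) = a + ∑ i ∈ I, w i • LamV i := by
  obtain ⟨⟨hx₁, hx₂, hx₃, hx₄⟩, hx₅⟩ := hx
  set w : ℕ → ℝ := fun i => (x i - a i) - (x (i + 1) - a (i + 1))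
  have hdec := eq_const_add_sum_smul_lamV (k := k) (z := x - a) (by simp [hx₃, ha₀])
    (fun j hj => by simp [hx₄ j hj, hatail j hj])
  have hsum : ∑ i ∈ Ico 1 k, w i • LamV i = ∑ i ∈ I, w i • LamV i := by
    refine (sum_subset hI fun i hi hiI => ?_).symm
    have := hx₅ i (mem_sdiff.2 ⟨hi, hiI⟩)
    simp only [w]
    rw [show x i - a i - (x (i + 1) - a (i + 1)) = 0 by linarith, zero_smul]
  have heq : x - (x k - a k) • (fun _ => (1 : ℝ)) = a + ∑ i ∈ I, w i • LamV i := by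
    funext j
    have := congr_fun hdec j
    simp only [Pi.sub_apply, Pi.add_apply] at this
    simp only [Pi.sub_apply, Pi.add_apply, Pi.smul_apply, smul_eq_mul, mul_one, ← hsum]
    linarith
  refine ⟨w, fun i hi => ?_, ?_, heq⟩
  · obtain ⟨h₁, h₂⟩ := mem_Ico.1 (hI hi)
    linarith [hx₁ i h₁ h₂]
  · have h₁ := congr_fun heq 1
    rw [Pi.add_apply, sum_smul_lamV_apply, filter_true_of_mem fun i hi => (mem_Ico.1 (hI hi)).1]
      at h₁
    simp only [Pi.sub_apply, Pi.smul_apply, smul_eq_mul, mul_one] at h₁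
    linarith

theorem setOf_exists_sub_smul_one_mem_convexHull_eq_alcoveFace (hl : 0 < l)
    (hI : I ⊆ Ico 1 k) (ha₀ : a 0 = a 1) (hatail : ∀ j, k ≤ j → a j = a k) :
    {y | ∃ c : ℝ, (y - c • (fun _ => (1 : ℝ)))
        ∈ convexHull ℝ ({a} ∪ (fun i => a + (l : ℝ) • LamV i) '' (I : Set ℕ))}
      = alcoveFace k l a I := by
  ext y
  constructor
  · rintro ⟨c, hc⟩
    refine (sub_smul_one_mem_alcoveFace_iff c).1
      (convexHull_min ?_ (isFaceOf_alcoveFace k l a I).2.1 hc)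
    rintro x (rfl | ⟨i, hi : i ∈ I, rfl⟩)
    · simpa using add_sum_smul_lamV_mem_alcoveFace (l := l) ha₀ hatail hI (w := 0) (by simp)
        (by simp)
    · simpa [ite_smul, hi] using add_sum_smul_lamV_mem_alcoveFace ha₀ hatail hI
        (w := fun j => if j = i then (l : ℝ) else 0) (fun j _ => by positivity) (by simp [hi])
  · intro hy
    obtain ⟨w, hw₀, hw, heq⟩ := exists_sub_smul_one_eq_add_sum_smul_lamV hI ha₀ hatail hy
    have hl' : (0 : ℝ) < l := by exact_mod_cast hl
    have hrescale : ∑ i ∈ I, w i • LamV i = ∑ i ∈ I, (w i / l) • ((l : ℝ) • LamV i) :=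
      sum_congr rfl fun i _ => by rw [smul_smul, div_mul_cancel₀ _ hl'.ne']
    refine ⟨y k - a k, ?_⟩
    rw [heq, hrescale]
    exact add_sum_smul_mem_convexHull a _ I (fun i hi => div_nonneg (hw₀ i hi) hl'.le)
      (by rw [← sum_div]; exact div_le_one_of_le₀ hw hl'.le)

theorem exists_smul_sub_smul_mem_alcoveFace (hI : I ⊆ Ico 1 k) (hcard : (#I : ℝ) + 1 ≤ l)
    (ha₀ : a 0 = a 1) (hatail : ∀ j, k ≤ j → a j = a k) {q : ℕ → ℝ}
    (hq : q ∈ alcoveFace k l a I) :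
    ∃ ε : ℝ, 0 < ε ∧ (1 + ε) • (a + ∑ i ∈ I, LamV i) - ε • q ∈ alcoveFace k l a I := by
  obtain ⟨w, hw₀, hw, heq⟩ := exists_sub_smul_one_eq_add_sum_smul_lamV hI ha₀ hatail hq
  generalize q k - a k = c at heq
  obtain rfl := sub_eq_iff_eq_add.1 heq
  have hl : (0 : ℝ) < l := by linarith [(#I).cast_nonneg (α := ℝ)]
  refine ⟨(l : ℝ)⁻¹, inv_pos.2 hl, ?_⟩
  set ε := (l : ℝ)⁻¹
  have hε : ε * l = 1 := inv_mul_cancel₀ hl.ne'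
  have hy : (1 + ε) • (a + ∑ i ∈ I, LamV i)
        - ε • (a + ∑ i ∈ I, w i • LamV i + c • (fun _ => (1 : ℝ)))
        - (-(ε * c)) • (fun _ => (1 : ℝ)) = a + ∑ i ∈ I, (1 + ε - ε * w i) • LamV i := by
    simp only [sub_smul, add_smul, one_smul, mul_smul, sum_sub_distrib, sum_add_distrib,
      ← smul_sum]
    module
  rw [← sub_smul_one_mem_alcoveFace_iff (-(ε * c)), hy]
  refine add_sum_smul_lamV_mem_alcoveFace ha₀ hatail hI (fun i hi => ?_) ?_
  · have : w i ≤ l := (single_le_sum hw₀ hi).trans hw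
    nlinarith [inv_pos.2 hl]
  · have : ε * #I ≤ 1 := hε ▸ mul_le_mul_of_nonneg_left (by linarith) (inv_pos.2 hl).le
    have : 0 ≤ ε * ∑ i ∈ I, w i := mul_nonneg (inv_pos.2 hl).le (sum_nonneg hw₀)
    simp only [sum_sub_distrib, sum_const, nsmul_eq_mul, ← mul_sum]
    nlinarith

end alcoveFace

theorem add_sum_lamV_succ_lt {a : ℕ → ℝ} {I : Finset ℕ} {i : ℕ} (hdom : a (i + 1) ≤ a i)
    (hI : a i = a (i + 1) → i ∈ I) :
    (a + ∑ j ∈ I, LamV j) (i + 1) < (a + ∑ j ∈ I, LamV j) i := by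
  have hgap := sum_smul_lamV_sub_succ I (fun _ => 1) i
  simp only [one_smul] at hgap
  simp only [Pi.add_apply]
  split_ifs at hgap with hiI
  · linarith
  · linarith [hdom.lt_of_ne fun h => hiI (hI h.symm)]

theorem singular_face_contains_integral_interior_point_general
    (k l : ℕ) (hk : 2 ≤ k) (hkl : k ≤ l)
    (a : ℕ → ℝ) (ha0 : a 0 = a 1) (hatail : ∀ j, k ≤ j → a j = a k)
    (hdom : ∀ i, 1 ≤ i → i < k → a (i + 1) ≤ a i)
    (I : Finset ℕ) (hI : ∀ i, i ∈ I ↔ 1 ≤ i ∧ i < k ∧ a i = a (i + 1))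
    (C : Set (ℕ → ℝ))
    (hC : C = {x | (∀ i, 1 ≤ i → i < k → x (i + 1) - a (i + 1) ≤ x i - a i)
      ∧ (x 1 - a 1) - (x k - a k) ≤ (l : ℝ)
      ∧ x 0 = x 1 ∧ ∀ j, k ≤ j → x j = x k})
    (F : Set (ℕ → ℝ))
    (hF : F = {y | ∃ c : ℝ, (y - c • (fun _ => (1 : ℝ)))
        ∈ convexHull ℝ ({a} ∪ (fun i => a + (l : ℝ) • LamV i) '' (I : Set ℕ))})
    (p : ℕ → ℝ) (hp : p = a + ∑ i ∈ I, LamV i) :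
    IsFaceOf F C ∧ p ∈ F ∧ (∀ G, IsFaceOf G F → G ≠ F → p ∉ G)
      ∧ ∀ i, 1 ≤ i → i < k → p (i + 1) < p i := by
  have hIk : I ⊆ Ico 1 k := fun i hi =>
    mem_Ico.2 ⟨((hI i).1 hi).1, ((hI i).1 hi).2.1⟩
  have hcard : (#I : ℝ) + 1 ≤ l := by
    have := card_le_card hIk
    rw [Nat.card_Ico] at this
    exact_mod_cast (by omega : #I + 1 ≤ l)
  subst hC hF hp
  rw [setOf_exists_sub_smul_one_mem_convexHull_eq_alcoveFace (by omega) hIk ha0 hatail]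
  refine ⟨isFaceOf_alcoveFace k l a I, ?_, fun G hG hGF => hG.notMem_of_ne hGF fun q hq =>
      exists_smul_sub_smul_mem_alcoveFace hIk hcard ha0 hatail hq,
    fun i hi₁ hik => add_sum_lamV_succ_lt (hdom i hi₁ hik) fun h => (hI i).2 ⟨hi₁, hik, h⟩⟩
  simpa using add_sum_smul_lamV_mem_alcoveFace ha0 hatail hIk (w := fun _ => 1)
    (fun _ _ => zero_le_one) (by simp only [sum_const, nsmul_eq_mul, mul_one]; linarith)

/-- Let k ≤ l.  Every open face of the level-l alcove geometry in the
positive Weyl chamber of sl_k contains a dominant integral weight: if a is a dominant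
integral weight with (a, α_i) divisible by l for all simple roots α_i, and
I = {i : (a, α_i) = 0}, then p = a + Σ_{i∈I} Λ_i lies in the interior (complement of all
proper subfaces) of the face F = conv({a} ∪ {a + lΛ_i : i ∈ I}) (modulo the diagonal) of
the closure C of the translated fundamental alcove a + A⁺, and p lies in the interior of
the positive Weyl chamber (p_i > p_{i+1} for all i). -/
theorem singular_face_contains_integral_interior_point
    (k l : ℕ) (hk : 2 ≤ k) (hkl : k ≤ l)
    (a : ℕ → ℝ) (ha0 : a 0 = a 1) (hatail : ∀ j, k ≤ j → a j = a k)
    (hdom : ∀ i, 1 ≤ i → i < k → a (i + 1) ≤ a i)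
    (haint : ∀ i, 1 ≤ i → i ≤ k → ∃ m : ℤ, a i = (m : ℝ))
    (hdiv : ∀ i, 1 ≤ i → i < k → ∃ m : ℤ, a i - a (i + 1) = (m : ℝ) * (l : ℝ))
    (I : Finset ℕ) (hI : ∀ i, i ∈ I ↔ 1 ≤ i ∧ i < k ∧ a i = a (i + 1))
    (C : Set (ℕ → ℝ))
    (hC : C = {x | (∀ i, 1 ≤ i → i < k → x (i + 1) - a (i + 1) ≤ x i - a i)
      ∧ (x 1 - a 1) - (x k - a k) ≤ (l : ℝ)
      ∧ x 0 = x 1 ∧ ∀ j, k ≤ j → x j = x k})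
    (F : Set (ℕ → ℝ))
    (hF : F = {y | ∃ c : ℝ, (y - c • (fun _ => (1 : ℝ)))
        ∈ convexHull ℝ ({a} ∪ (fun i => a + (l : ℝ) • LamV i) '' (I : Set ℕ))})
    (p : ℕ → ℝ) (hp : p = a + ∑ i ∈ I, LamV i) :
    IsFaceOf F C ∧ p ∈ F ∧ (∀ G, IsFaceOf G F → G ≠ F → p ∉ G)
      ∧ ∀ i, 1 ≤ i → i < k → p (i + 1) < p i :=
  singular_face_contains_integral_interior_point_general k l hk hkl a ha0 hatail hdom I hI C hC F hF
    p hp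
end
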